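/- Let G be a 2-connected k-cactus (k ≥ 1) with ear decomposition [Q_0, Q_1, ..., Q_l], where Q_0 is a cycle. Then l ≤ k - 1. -/

import Mathlib

open SimpleGraph

variable {V : Type}

/-- `C` is a cycle subgraph of `H`. -/
def IsCycleSub (H : SimpleGraph V) (C : H.Subgraph) : Prop :=
  ∃ (v : V) (w : H.Walk v v), w.IsCycle ∧ w.toSubgraph = C

/-- The set of cycle subgraphs of `H` containing the edge `e`. -/
def CyclesThrough (H : SimpleGraph V) (e : Sym2 V) : Set H.Subgraph :=
  {C | IsCycleSub H C ∧ e ∈ C.edgeSet}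

/-- A `k`-cactus: a connected graph in which each edge lies in at most `k` cycles. -/
def IsKCactus (H : SimpleGraph V) (k : ℕ) : Prop :=
  H.Connected ∧ ∀ e ∈ H.edgeSet, (CyclesThrough H e).ncard ≤ k

/-- A graph is 2-connected: at least 3 vertices, connected, and no cut-vertex. -/
def TwoConnected [Fintype V] (H : SimpleGraph V) : Prop :=
  3 ≤ Fintype.card V ∧ H.Connected ∧
    ∀ v : V, ((⊤ : H.Subgraph).deleteVerts {v}).coe.Connected

/-- A subgraph is 2-connected. -/
def SubTwoConn {H : SimpleGraph V} (B : H.Subgraph) : Prop :=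
  3 ≤ B.verts.ncard ∧ B.Connected ∧ ∀ v : V, (B.deleteVerts {v}).coe.Connected

/-- `Q` is an ear of `F` with end-vertices `a` and `b`: a nontrivial path whose
end-vertices lie in `F` but whose internal vertices (and edges) do not. -/
def IsEarWith {H : SimpleGraph V} (F Q : H.Subgraph) (a b : V) : Prop :=
  a ∈ F.verts ∧ b ∈ F.verts ∧
    ∃ p : H.Walk a b, p.IsPath ∧ 1 ≤ p.length ∧ p.toSubgraph = Q ∧
      (∀ w ∈ p.support, w ≠ a → w ≠ b → w ∉ F.verts) ∧
      ∀ e ∈ p.edges, e ∉ F.edgeSet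

/-- `Q` is an ear of `F`. -/
def IsEar {H : SimpleGraph V} (F Q : H.Subgraph) : Prop :=
  ∃ a b, IsEarWith F Q a b

/-- `A` is a `k`-theta subgraph with branch vertices `u` and `v`:
the union of `k` internally disjoint paths from `u` to `v`, at most one of length 1. -/
def IsThetaSubUV {H : SimpleGraph V} (A : H.Subgraph) (k : ℕ) (u v : V) : Prop :=
  u ≠ v ∧ ∃ p : Fin k → H.Walk u v,
    (∀ i, (p i).IsPath) ∧ (∀ i, 1 ≤ (p i).length) ∧
    (∀ i j, i ≠ j → ∀ w ∈ (p i).support, w ∈ (p j).support → w = u ∨ w = v) ∧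
    {i | (p i).length = 1}.Subsingleton ∧
    (⨆ i, (p i).toSubgraph) = A

/-- `A` is a `k`-theta subgraph. -/
def IsThetaSub {H : SimpleGraph V} (A : H.Subgraph) (k : ℕ) : Prop :=
  ∃ u v, IsThetaSubUV A k u v

/-- `G` is (as a whole graph) a `k`-theta graph. -/
def IsThetaGraph (G : SimpleGraph V) (k : ℕ) : Prop :=
  IsThetaSub (⊤ : G.Subgraph) k

/-- `B` is a `θ₃'`-subgraph: a theta graph together with an ear whose
end-vertices avoid the two branch (degree-3) vertices. -/
def IsThetaPrimeSub {H : SimpleGraph V} (B : H.Subgraph) : Prop :=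
  ∃ (A Q : H.Subgraph) (u v a b : V), IsThetaSubUV A 3 u v ∧ IsEarWith A Q a b ∧
    a ≠ u ∧ a ≠ v ∧ b ≠ u ∧ b ≠ v ∧ A ⊔ Q = B

/-- `G` is (as a whole graph) a `θ₃'`-graph. -/
def IsThetaPrimeGraph (G : SimpleGraph V) : Prop :=
  IsThetaPrimeSub (⊤ : G.Subgraph)

/-- The subgraph `B` has no cut-vertex. -/
def NoCutVtx {H : SimpleGraph V} (B : H.Subgraph) : Prop :=
  ∀ v : V, (B.deleteVerts {v}).coe.Preconnected

/-- `B` is a block of `H`: a maximal connected subgraph without a cut-vertex. -/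
def IsBlock (H : SimpleGraph V) (B : H.Subgraph) : Prop :=
  B.Connected ∧ NoCutVtx B ∧
    ∀ C : H.Subgraph, B ≤ C → C.Connected → NoCutVtx C → C = B

/-- `B` is a single-edge subgraph. -/
def IsSingleEdgeSub {H : SimpleGraph V} (B : H.Subgraph) : Prop :=
  ∃ (a b : V) (h : H.Adj a b), B = H.subgraphOfAdj h

/-- The set of cycle subgraphs of `H` lying inside `A` and containing the edge `e`. -/
def CyclesThroughIn (H : SimpleGraph V) (A : H.Subgraph) (e : Sym2 V) : Set H.Subgraph :=
  {C | IsCycleSub H C ∧ C ≤ A ∧ e ∈ C.edgeSet}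

/-- `[Q 0, Q 1, …, Q l]` is an ear decomposition of `H`. -/
def IsEarDecomp (H : SimpleGraph V) (l : ℕ) (Q : Fin (l + 1) → H.Subgraph) : Prop :=
  IsCycleSub H (Q 0) ∧
  (∀ i : Fin (l + 1), 0 < (i : ℕ) →
    IsEar (⨆ j : Fin (l + 1), ⨆ _ : j < i, Q j) (Q i)) ∧
  (∀ i j, i ≠ j → Disjoint (Q i).edgeSet (Q j).edgeSet) ∧
  (⨆ i, Q i) = ⊤

/-!
Fix an edge `e` of the initial cycle `Q 0`. Along the ear decomposition, any two distinct vertices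
of `Q 0 ∪ … ∪ Q i` stay joined by a path through `e` inside that union: a new ear together with
such a path between its ends is a cycle through `e`, and every vertex of the ear lies on it. That
same cycle uses an edge of the new ear, so it is not contained in the earlier union. Hence each ear
adds a new cycle through `e`, and `Q 0 ∪ … ∪ Q l` contains at least `l + 1` of them.
-/

namespace SimpleGraph

variable {G : SimpleGraph V}

namespace Walk

theorem IsPath.start_notMem_support_tail {u v : V} {p : G.Walk u v} (hp : p.IsPath) :
    u ∉ p.support.tail := by
  have h := hp.support_nodup
  rw [← cons_tail_support] at h
  exact (List.nodup_cons.mp h).1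

theorem IsPath.append {u v w : V} {p : G.Walk u v} {q : G.Walk v w} (hp : p.IsPath)
    (hq : q.IsPath) (h : ∀ x ∈ p.support, x ∈ q.support → x = v) : (p.append q).IsPath := by
  rw [isPath_def, support_append, List.nodup_append']
  refine ⟨hp.support_nodup, hq.support_nodup.tail, fun x hxp hxq => ?_⟩
  obtain rfl := h x hxp (List.mem_of_mem_tail hxq)
  exact hq.start_notMem_support_tail hxq

end Walk

open Walk

namespace Subgraph

def LinkedThrough (F : G.Subgraph) (e : Sym2 V) : Prop :=
  ∀ ⦃x⦄, x ∈ F.verts → ∀ ⦃y⦄, y ∈ F.verts → x ≠ y →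
    ∃ p : G.Walk x y, p.IsPath ∧ p.toSubgraph ≤ F ∧ e ∈ p.edges

end Subgraph

theorem Walk.IsCycle.linkedThrough_toSubgraph {u : V} {c : G.Walk u u}
    (hc : c.IsCycle) {e : Sym2 V} (he : e ∈ c.edges) : c.toSubgraph.LinkedThrough e := by
  classical
  intro x hx y hy hxy
  rw [mem_verts_toSubgraph] at hx
  rw [← toSubgraph_rotate c hx] at hy ⊢
  rw [mem_verts_toSubgraph] at hy
  obtain ⟨t, d, htd⟩ := mem_support_iff_exists_append.mp hy
  have hcyc : (t.append d).IsCycle := htd ▸ hc.rotate hx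
  have he' : e ∈ t.edges ∨ e ∈ d.edges := by
    rw [← List.mem_append, ← edges_append, ← htd]
    exact (c.rotate_edges x hx).mem_iff.mpr he
  rw [htd, toSubgraph_append]
  rcases he' with het | hed
  · exact ⟨t, hcyc.isPath_of_append_left (not_nil_of_ne hxy.symm), le_sup_left, het⟩
  · refine ⟨d.reverse, (hcyc.isPath_of_append_right (not_nil_of_ne hxy)).reverse, ?_, ?_⟩
    · rw [toSubgraph_reverse]
      exact le_sup_right
    · rwa [edges_reverse, List.mem_reverse]

end SimpleGraph

open SimpleGraph Walk

section Ear

variable {G : SimpleGraph V} {F Q : G.Subgraph} {a b : V}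

theorem IsEarWith.symm (h : IsEarWith F Q a b) : IsEarWith F Q b a := by
  obtain ⟨ha, hb, p, hp, hlen, rfl, hint, hedg⟩ := h
  refine ⟨hb, ha, p.reverse, hp.reverse, by rwa [length_reverse], toSubgraph_reverse p, ?_, ?_⟩
  · intro w hw hwb hwa
    rw [support_reverse, List.mem_reverse] at hw
    exact hint w hw hwa hwb
  · intro f hf
    rw [edges_reverse, List.mem_reverse] at hf
    exact hedg f hf

theorem IsEarWith.ne (h : IsEarWith F Q a b) : a ≠ b := by
  obtain ⟨-, -, p, hp, hlen, -⟩ := h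
  rintro rfl
  simp [length_eq_zero_iff.mpr (isPath_iff_nil.mp hp)] at hlen

theorem IsEarWith.not_le (h : IsEarWith F Q a b) : ¬ Q ≤ F := by
  obtain ⟨-, -, p, -, hlen, rfl, -, hedg⟩ := h
  obtain ⟨f, hf⟩ := List.exists_mem_of_ne_nil p.edges
    (List.ne_nil_of_length_pos (by rw [length_edges]; omega))
  exact fun hle => hedg f hf (Subgraph.edgeSet_mono hle ((mem_edges_toSubgraph p).mpr hf))

end Ear

namespace SimpleGraph.Subgraph.LinkedThrough

variable {G : SimpleGraph V} {F Q : G.Subgraph} {a b : V} {e : Sym2 V}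

theorem exists_isCycle_of_isEarWith
    (hF : F.LinkedThrough e) (hQ : IsEarWith F Q a b) :
    ∃ c : G.Walk a a, c.IsCycle ∧ e ∈ c.edges ∧ Q ≤ c.toSubgraph ∧ c.toSubgraph ≤ F ⊔ Q := by
  have hab := hQ.ne
  obtain ⟨ha, hb, p, hp, -, rfl, hint, hedg⟩ := hQ
  obtain ⟨q, hq, hqF, hqe⟩ := hF hb ha hab.symm
  refine ⟨p.append q, ?_, by simp [hqe], by simp [toSubgraph_append],
    by simpa [toSubgraph_append] using le_sup_of_le_left hqF⟩
  rw [isCycle_def, isTrail_append, tail_support_append, List.nodup_append']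
  refine ⟨⟨hp.isTrail, hq.isTrail, fun f hfp hfq => hedg f hfp ?_⟩,
    fun hnil => hab (nil_append_iff.mp (by rw [hnil]; exact nil_nil)).1.eq,
    hp.support_nodup.tail, hq.support_nodup.tail, fun w hwp hwq => ?_⟩
  · exact Subgraph.edgeSet_mono hqF ((mem_edges_toSubgraph q).mpr hfq)
  · have hwa : w ≠ a := fun h => hp.start_notMem_support_tail (h ▸ hwp)
    have hwb : w ≠ b := fun h => hq.start_notMem_support_tail (h ▸ hwq)
    exact hint w (List.mem_of_mem_tail hwp) hwa hwb
      (Subgraph.verts_mono hqF ((mem_verts_toSubgraph q).mpr (List.mem_of_mem_tail hwq)))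

theorem exists_isPath_of_isEarWith
    (hF : F.LinkedThrough e) (hQ : IsEarWith F Q a b) {x y : V} (hx : x ∈ Q.verts)
    (hxF : x ∉ F.verts) (hy : y ∈ F.verts) (hya : y ≠ a) :
    ∃ r : G.Walk x y, r.IsPath ∧ r.toSubgraph ≤ F ⊔ Q ∧ e ∈ r.edges := by
  obtain ⟨ha, hb, p, hp, -, rfl, hint, -⟩ := hQ
  rw [mem_verts_toSubgraph] at hx
  obtain ⟨t, d, ht, -, rfl⟩ := hp.mem_support_iff_exists_append.mp hx
  obtain ⟨q, hq, hqF, hqe⟩ := hF ha hy hya.symm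
  have hbt : b ∉ t.support := fun hbt =>
    hp.ne_of_mem_support_of_append (fun h => hxF (h ▸ hb)) hbt d.end_mem_support rfl
  refine ⟨t.reverse.append q, ht.reverse.append hq fun w hwt hwq => ?_, ?_, by simp [hqe]⟩
  · rw [support_reverse, List.mem_reverse] at hwt
    by_contra hwa
    exact hint w (by simp [hwt]) hwa (fun hwb => hbt (hwb ▸ hwt))
      (Subgraph.verts_mono hqF ((mem_verts_toSubgraph q).mpr hwq))
  · rw [toSubgraph_append, toSubgraph_reverse, toSubgraph_append]
    exact sup_le (le_sup_of_le_right le_sup_left) (le_sup_of_le_left hqF)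

theorem sup_of_isEarWith
    (hF : F.LinkedThrough e) (hQ : IsEarWith F Q a b) : (F ⊔ Q).LinkedThrough e := by
  have outside : ∀ ⦃x⦄, x ∈ Q.verts → x ∉ F.verts → ∀ ⦃y⦄, y ∈ (F ⊔ Q).verts → x ≠ y →
      ∃ r : G.Walk x y, r.IsPath ∧ r.toSubgraph ≤ F ⊔ Q ∧ e ∈ r.edges := by
    intro x hx hxF y hy hxy
    by_cases hyF : y ∈ F.verts
    · by_cases hya : y = a
      · subst hya
        exact sup_comm F Q ▸ hF.exists_isPath_of_isEarWith hQ.symm hx hxF hyF hQ.ne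
      · exact hF.exists_isPath_of_isEarWith hQ hx hxF hyF hya
    · obtain ⟨c, hc, hce, hQc, hcF⟩ := hF.exists_isCycle_of_isEarWith hQ
      obtain ⟨r, hr, hrc, hre⟩ := hc.linkedThrough_toSubgraph hce (Subgraph.verts_mono hQc hx)
        (Subgraph.verts_mono hQc (Or.resolve_left hy hyF)) hxy
      exact ⟨r, hr, hrc.trans hcF, hre⟩
  intro x hx y hy hxy
  by_cases hxF : x ∈ F.verts
  · by_cases hyF : y ∈ F.verts
    · obtain ⟨r, hr, hrF, hre⟩ := hF hxF hyF hxy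
      exact ⟨r, hr, hrF.trans le_sup_left, hre⟩
    · obtain ⟨r, hr, hrF, hre⟩ := outside (Or.resolve_left hy hyF) hyF hx hxy.symm
      exact ⟨r.reverse, hr.reverse, by rwa [toSubgraph_reverse],
        by rwa [edges_reverse, List.mem_reverse]⟩
  · exact outside (Or.resolve_left hx hxF) hxF hy hxy

theorem ncard_cyclesThroughIn_lt_sup [Finite V]
    (hF : F.LinkedThrough e) (hQ : IsEarWith F Q a b) :
    (CyclesThroughIn G F e).ncard < (CyclesThroughIn G (F ⊔ Q) e).ncard := by
  obtain ⟨c, hc, hce, hQc, hcF⟩ := hF.exists_isCycle_of_isEarWith hQ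
  have hsub : CyclesThroughIn G F e ⊆ CyclesThroughIn G (F ⊔ Q) e :=
    fun C ⟨hC, hCF, hCe⟩ => ⟨hC, hCF.trans le_sup_left, hCe⟩
  refine Set.ncard_lt_ncard ((Set.ssubset_iff_of_subset hsub).mpr ⟨c.toSubgraph, ?_, ?_⟩)
  · exact ⟨⟨a, c, hc, rfl⟩, hcF, (mem_edges_toSubgraph c).mpr hce⟩
  · exact fun hC => hQ.not_le (hQc.trans hC.2.1)

end SimpleGraph.Subgraph.LinkedThrough

theorem IsEarDecomp.linkedThrough_and_le_ncard [Finite V] {G : SimpleGraph V} {l : ℕ}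
    {Q : Fin (l + 1) → G.Subgraph} (hQ : IsEarDecomp G l Q) {e : Sym2 V}
    (he : e ∈ (Q 0).edgeSet) (i : Fin (l + 1)) :
    (⨆ j ≤ i, Q j).LinkedThrough e ∧
      (i : ℕ) + 1 ≤ (CyclesThroughIn G (⨆ j ≤ i, Q j) e).ncard := by
  induction i using Fin.induction with
  | zero =>
    obtain ⟨v, c, hc, hcQ⟩ := hQ.1
    have h0 : (⨆ j ≤ (0 : Fin (l + 1)), Q j) = Q 0 := by simp
    rw [h0, ← hcQ]
    rw [← hcQ, mem_edges_toSubgraph] at he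
    refine ⟨hc.linkedThrough_toSubgraph he, (Set.ncard_pos (Set.toFinite _)).mpr ?_⟩
    exact ⟨c.toSubgraph, ⟨v, c, hc, rfl⟩, le_rfl, (mem_edges_toSubgraph c).mpr he⟩
  | succ i ih =>
    obtain ⟨a, b, hear⟩ := hQ.2.1 i.succ (by simp)
    have hprev : (⨆ j < i.succ, Q j) = ⨆ j ≤ i.castSucc, Q j := by
      simp only [Fin.le_castSucc_iff]
    rw [hprev] at hear
    rw [biSup_le_eq_sup, hprev]
    have hlt := ih.1.ncard_cyclesThroughIn_lt_sup hear
    simp only [Fin.val_succ, Fin.val_castSucc] at ih ⊢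
    exact ⟨ih.1.sup_of_isEarWith hear, by omega⟩

theorem earDecomp_length_le_general [Fintype V] (G : SimpleGraph V) (k l : ℕ)
    (hc : IsKCactus G k)
    (Q : Fin (l + 1) → G.Subgraph) (hQ : IsEarDecomp G l Q) :
    l ≤ k - 1 := by
  obtain ⟨v, c, hc0, hcQ⟩ := hQ.1
  obtain ⟨e, he⟩ := List.exists_mem_of_ne_nil c.edges (mt edges_eq_nil.mp hc0.not_nil)
  have heQ : e ∈ (Q 0).edgeSet := hcQ ▸ (mem_edges_toSubgraph c).mpr he
  have hcycles := (hQ.linkedThrough_and_le_ncard heQ (Fin.last l)).2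
  have hsub : CyclesThroughIn G (⨆ j ≤ Fin.last l, Q j) e ⊆ CyclesThrough G e :=
    fun C ⟨hC, _, hCe⟩ => ⟨hC, hCe⟩
  have hle := Set.ncard_le_ncard hsub
  have hk := hc.2 e ((Q 0).edgeSet_subset heQ)
  rw [Fin.val_last] at hcycles
  omega

/-- A 2-connected `k`-cactus with ear decomposition `[Q 0, …, Q l]` satisfies
`l ≤ k - 1`. -/
theorem earDecomp_length_le [Fintype V] (G : SimpleGraph V) (k l : ℕ) (hk : 1 ≤ k)
    (h2 : TwoConnected G) (hc : IsKCactus G k)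
    (Q : Fin (l + 1) → G.Subgraph) (hQ : IsEarDecomp G l Q) :
    l ≤ k - 1 :=
  earDecomp_length_le_general G k l hc Q hQ
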